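/- Let G be a totally disconnected, locally compact Hausdorff topological group and α a tidy bicontinuous automorphism of G. Then U_α ∩ M_α = {1} and U_{α^{-1}} ∩ M_α = {1}. -/

import Mathlib

open Filter Topology Set Pointwise MeasureTheory
open scoped ENNReal

variable {G : Type*} [Group G] [TopologicalSpace G] [IsTopologicalGroup G]

/-- `V₊ = ⋂ n ≥ 0, α^n(V)`. -/
def posPart (α : MulAut G) (V : Set G) : Set G := ⋂ n : ℕ, ⇑(α ^ n) '' V

/-- `V₋ = ⋂ n ≥ 0, α^{-n}(V)`. -/
def negPart (α : MulAut G) (V : Set G) : Set G := ⋂ n : ℕ, ⇑(α⁻¹ ^ n) '' V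

/-- `V₊₊ = ⋃ n ≥ 0, α^n(V₊)`. -/
def ppPart (α : MulAut G) (V : Set G) : Set G := ⋃ n : ℕ, ⇑(α ^ n) '' posPart α V

/-- `V₋₋ = ⋃ n ≥ 0, α^{-n}(V₋)`. -/
def mmPart (α : MulAut G) (V : Set G) : Set G := ⋃ n : ℕ, ⇑(α⁻¹ ^ n) '' negPart α V

/-- A compact open subgroup `V ⊆ G` is tidy for `α` if (T1) `V = V₊V₋` and
(T2) `V₊₊` and `V₋₋` are closed in `G`. -/
def IsTidyFor (α : MulAut G) (V : Subgroup G) : Prop :=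
  IsCompact (V : Set G) ∧ IsOpen (V : Set G) ∧
  (V : Set G) = posPart α (V : Set G) * negPart α (V : Set G) ∧
  IsClosed (ppPart α (V : Set G)) ∧ IsClosed (mmPart α (V : Set G))

/-- `α` is tidy if every identity neighbourhood of `G` contains a compact open
subgroup of `G` tidy for `α`. -/
def IsTidy (α : MulAut G) : Prop :=
  ∀ U ∈ 𝓝 (1 : G), ∃ V : Subgroup G, IsTidyFor α V ∧ (V : Set G) ⊆ U

/-- The contraction group `U_α = {x : α^n(x) → 1}`. -/
def contractionGroup (α : MulAut G) : Set G :=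
  {x : G | Tendsto (fun n : ℕ => (α ^ n) x) atTop (𝓝 1)}

/-- `P_α = {x : {α^n(x), n ∈ ℕ} relatively compact}`. -/
def parSet (α : MulAut G) : Set G :=
  {x : G | IsCompact (closure (Set.range fun n : ℕ => (α ^ n) x))}

/-- `M_α = {x : {α^n(x), n ∈ ℤ} relatively compact}`. -/
def levSet (α : MulAut G) : Set G :=
  {x : G | IsCompact (closure (Set.range fun n : ℤ => (α ^ n) x))}

/-- A subgroup `V` of `G` contained in an `α`-stable subset `M ⊆ G` is a compact
open subgroup of the topological group `M` tidy for the restriction `α|_M`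
(openness and closedness of `V`, `V₊₊`, `V₋₋` being relative to `M`). -/
def IsTidyForIn (α : MulAut G) (M : Set G) (V : Subgroup G) : Prop :=
  (V : Set G) ⊆ M ∧ IsCompact (V : Set G) ∧
  IsOpen ((Subtype.val ⁻¹' (V : Set G)) : Set M) ∧
  (V : Set G) = posPart α (V : Set G) * negPart α (V : Set G) ∧
  IsClosed ((Subtype.val ⁻¹' ppPart α (V : Set G)) : Set M) ∧
  IsClosed ((Subtype.val ⁻¹' mmPart α (V : Set G)) : Set M)

/-- The restriction `α|_M` is tidy: every identity neighbourhood of the topological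
group `M` contains a compact open subgroup of `M` tidy for `α|_M`. -/
def IsTidyOn (α : MulAut G) (M : Set G) : Prop :=
  ∀ U ∈ 𝓝 (1 : G), ∃ V : Subgroup G, IsTidyForIn α M V ∧ (V : Set G) ⊆ U

/-- `U_{α/H}`: the set of `x ∈ G` with `α^n(x) → 1` modulo `H`. -/
def relContraction (α : MulAut G) (H : Set G) : Set G :=
  {x : G | ∀ V ∈ 𝓝 (1 : G), ∃ N : ℕ, ∀ n ≥ N, (α ^ n) x ∈ V * H}

/-- The set `K`: the intersection, over all compact open subgroups `O` of `G`, of the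
closures of `{x ∈ M_α : α^n(x) ∈ O for all sufficiently large n}`. -/
def KSet (α : MulAut G) : Set G :=
  ⋂ O ∈ {O : Subgroup G | IsCompact (O : Set G) ∧ IsOpen (O : Set G)},
    closure {x ∈ levSet α | ∃ N : ℕ, ∀ n ≥ N, (α ^ n) x ∈ O}

/-- `V₋ = ⋂ n ≥ 0, α^{-n}(V)` as a subgroup. -/
def negSubgroup (α : MulAut G) (V : Subgroup G) : Subgroup G :=
  ⨅ n : ℕ, V.map ((α⁻¹ ^ n : MulAut G) : G →* G)

/-- The index `[α^{-1}(H) : H]` of a subgroup `H` in `α^{-1}(H)` (equal to `0` if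
this index is infinite). -/
noncomputable def idx (α : MulAut G) (H : Subgroup G) : ℕ :=
  H.relIndex (H.map ((α⁻¹ : MulAut G) : G →* G))

set_option linter.unusedSectionVars false

lemma contPow {β : MulAut G} (hc : Continuous ⇑β) : ∀ n : ℕ, Continuous ⇑(β ^ n) := by
  intro n
  induction n with
  | zero => exact continuous_id.congr (fun g => by simp)
  | succ n ih =>
      have h : ⇑(β ^ (n + 1)) = ⇑(β ^ n) ∘ ⇑β := by
        ext g; simp [pow_succ]
      rw [h]; exact ih.comp hc

lemma cancel₁ (β : MulAut G) (n : ℕ) (g : G) : (β ^ n) ((β⁻¹ ^ n) g) = g := by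
  rw [inv_pow, ← MulAut.mul_apply, mul_inv_cancel, MulAut.one_apply]

lemma cancel₂ (β : MulAut G) (n : ℕ) (g : G) : (β⁻¹ ^ n) ((β ^ n) g) = g := by
  rw [inv_pow, ← MulAut.mul_apply, inv_mul_cancel, MulAut.one_apply]

lemma mem_image_inv_pow (β : MulAut G) {S : Set G} {n : ℕ} {x : G} :
    x ∈ ⇑(β⁻¹ ^ n) '' S ↔ (β ^ n) x ∈ S := by
  constructor
  · rintro ⟨a, ha, rfl⟩; rwa [cancel₁]
  · intro h; exact ⟨(β ^ n) x, h, cancel₂ β n x⟩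

lemma main_aux [T2Space G] [LocallyCompactSpace G]
    (β : MulAut G) (hc : Continuous ⇑β) (hc' : Continuous ⇑β⁻¹)
    (V : Subgroup G) (hVc : IsCompact (V : Set G)) (hVo : IsOpen (V : Set G))
    (hcl : IsClosed (mmPart β (V : Set G)))
    {x : G} (hx : Tendsto (fun n : ℕ => (β ^ n) x) atTop (𝓝 1))
    (hK : IsCompact (closure (Set.range fun n : ℤ => (β ^ n) x))) :
    x ∈ (V : Set G) := by
  set W : Set G := negPart β (V : Set G) with hW
  set H : Set G := mmPart β (V : Set G) with hHdef
  have mem_W_iff : ∀ {z : G}, z ∈ W ↔ ∀ n : ℕ, (β ^ n) z ∈ (V : Set G) := by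
    intro z
    simp only [hW, _root_.negPart, mem_iInter, mem_image_inv_pow]
  have mem_H_iff : ∀ {z : G}, z ∈ H ↔ ∃ n : ℕ, (β ^ n) z ∈ W := by
    intro z
    simp only [hHdef, hW, _root_.mmPart, mem_iUnion, mem_image_inv_pow]
  -- W is a subgroup-like set
  have oneW : (1 : G) ∈ W := mem_W_iff.mpr (fun n => by simpa using V.one_mem)
  have mulW : ∀ {a b : G}, a ∈ W → b ∈ W → a * b ∈ W := by
    intro a b ha hb
    exact mem_W_iff.mpr (fun n => by
      rw [map_mul]; exact V.mul_mem (mem_W_iff.mp ha n) (mem_W_iff.mp hb n))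
  have invW : ∀ {a : G}, a ∈ W → a⁻¹ ∈ W := by
    intro a ha
    exact mem_W_iff.mpr (fun n => by
      rw [map_inv]; exact V.inv_mem (mem_W_iff.mp ha n))
  have hWV : W ⊆ (V : Set G) := fun w hw => by simpa using mem_W_iff.mp hw 0
  -- β-stability of W
  have hWβ : ∀ {w : G}, w ∈ W → β w ∈ W := by
    intro w hw
    refine mem_W_iff.mpr (fun n => ?_)
    have := mem_W_iff.mp hw (n + 1)
    rwa [pow_succ, MulAut.mul_apply] at this
  have stepW : ∀ (j : ℕ) {w : G}, w ∈ W → (β ^ j) w ∈ W := by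
    intro j
    induction j with
    | zero => intro w hw; simpa using hw
    | succ j ih =>
        intro w hw
        have := ih (hWβ hw)
        rwa [← MulAut.mul_apply, ← pow_succ] at this
  -- H-stability
  have hHβ : ∀ {z : G}, z ∈ H → β z ∈ H := by
    intro z hz
    obtain ⟨n, hn⟩ := mem_H_iff.mp hz
    refine mem_H_iff.mpr ⟨n, ?_⟩
    rw [← MulAut.mul_apply, ← pow_succ]
    have := hWβ hn
    rwa [← MulAut.mul_apply, ← pow_succ'] at this
  have hHβ' : ∀ {z : G}, z ∈ H → β⁻¹ z ∈ H := by
    intro z hz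
    obtain ⟨n, hn⟩ := mem_H_iff.mp hz
    refine mem_H_iff.mpr ⟨n + 1, ?_⟩
    rw [pow_succ, MulAut.mul_apply, MulAut.apply_inv_self]
    exact hn
  have hHβpow : ∀ (j : ℕ) {z : G}, z ∈ H → (β ^ j) z ∈ H := by
    intro j
    induction j with
    | zero => intro z hz; simpa using hz
    | succ j ih =>
        intro z hz
        have := ih (hHβ hz)
        rwa [← MulAut.mul_apply, ← pow_succ] at this
  have hHβ'pow : ∀ (j : ℕ) {z : G}, z ∈ H → (β⁻¹ ^ j) z ∈ H := by
    intro j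
    induction j with
    | zero => intro z hz; simpa using hz
    | succ j ih =>
        intro z hz
        have := ih (hHβ' hz)
        rwa [← MulAut.mul_apply, ← pow_succ] at this
  have hHzpow : ∀ (n : ℤ) {z : G}, z ∈ H → (β ^ n) z ∈ H := by
    intro n
    induction n using Int.induction_on with
    | zero => intro z hz; simpa using hz
    | succ i ih =>
        intro z hz
        have h1 : (β : MulAut G) ^ ((i : ℤ) + 1) = β * β ^ (i : ℤ) := by
          rw [add_comm, zpow_add, zpow_one]
        rw [h1, MulAut.mul_apply]
        exact hHβ (ih hz)
    | pred i ih =>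
        intro z hz
        have h1 : (β : MulAut G) ^ (-(i : ℤ) - 1) = β⁻¹ * β ^ (-(i : ℤ)) := by
          rw [sub_eq_add_neg, add_comm, zpow_add, zpow_neg, zpow_one]
        rw [h1, MulAut.mul_apply]
        exact hHβ' (ih hz)
  -- H closed under mul and inv
  have pushW : ∀ {a : G} {n p : ℕ}, n ≤ p → (β ^ n) a ∈ W → (β ^ p) a ∈ W := by
    intro a n p hnp ha
    have h1 : (β : MulAut G) ^ p = β ^ (p - n) * β ^ n := by
      rw [← pow_add, Nat.sub_add_cancel hnp]
    rw [h1, MulAut.mul_apply]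
    exact stepW _ ha
  have mulH : ∀ {a b : G}, a ∈ H → b ∈ H → a * b ∈ H := by
    intro a b ha hb
    obtain ⟨n, hn⟩ := mem_H_iff.mp ha
    obtain ⟨p, hp⟩ := mem_H_iff.mp hb
    refine mem_H_iff.mpr ⟨max n p, ?_⟩
    rw [map_mul]
    exact mulW (pushW (le_max_left n p) hn) (pushW (le_max_right n p) hp)
  have invH : ∀ {a : G}, a ∈ H → a⁻¹ ∈ H := by
    intro a ha
    obtain ⟨n, hn⟩ := mem_H_iff.mp ha
    refine mem_H_iff.mpr ⟨n, ?_⟩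
    rw [map_inv]
    exact invW hn
  -- x ∈ H
  have hVnhds : (V : Set G) ∈ 𝓝 (1 : G) := hVo.mem_nhds V.one_mem
  obtain ⟨N, hN⟩ : ∃ N : ℕ, ∀ n ≥ N, (β ^ n) x ∈ (V : Set G) :=
    eventually_atTop.mp (hx.eventually_mem hVnhds)
  have hxW' : (β ^ N) x ∈ W := by
    refine mem_W_iff.mpr (fun n => ?_)
    rw [← MulAut.mul_apply, ← pow_add]
    exact hN (n + N) (Nat.le_add_left N n)
  have hxH : x ∈ H := mem_H_iff.mpr ⟨N, hxW'⟩
  -- W compact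
  have hWclosed : IsClosed W := by
    refine isClosed_iInter (fun n => ?_)
    exact (hVc.image (contPow hc' n)).isClosed
  have hWcpt : IsCompact W := hVc.of_isClosed_subset hWclosed hWV
  -- Baire: find open U with a point of H, U ∩ H ⊆ image
  have oneH : (1 : G) ∈ H := mem_H_iff.mpr ⟨0, by simpa using oneW⟩
  haveI : Nonempty ↥H := ⟨⟨1, oneH⟩⟩
  haveI : LocallyCompactSpace ↥H := hcl.locallyCompactSpace
  have hfc : ∀ n : ℕ, IsClosed ((Subtype.val ⁻¹' (⇑(β⁻¹ ^ n) '' W)) : Set H) := by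
    intro n
    exact ((hWcpt.image (contPow hc' n)).isClosed).preimage continuous_subtype_val
  have hUniv : (⋃ n : ℕ, ((Subtype.val ⁻¹' (⇑(β⁻¹ ^ n) '' W)) : Set H)) = univ := by
    rw [← preimage_iUnion]
    exact eq_univ_of_forall (fun z => z.2)
  obtain ⟨n₀, y₀, hy₀⟩ := by
    have := nonempty_interior_of_iUnion_of_closed hfc hUniv
    exact this.imp (fun n h => h)
  have hio : IsOpen (interior ((Subtype.val ⁻¹' (⇑(β⁻¹ ^ n₀) '' W)) : Set H)) :=
    isOpen_interior
  rw [isOpen_induced_iff] at hio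
  obtain ⟨U, hUo, hUeq⟩ := hio
  have hy₀U : (y₀ : G) ∈ U := by
    have : y₀ ∈ (Subtype.val ⁻¹' U : Set H) := by rw [hUeq]; exact hy₀
    exact this
  have hUH : ∀ z : G, z ∈ U → z ∈ H → (β ^ n₀) z ∈ W := by
    intro z hzU hzH
    have h1 : (⟨z, hzH⟩ : ↥H) ∈ (Subtype.val ⁻¹' U : Set H) := hzU
    rw [hUeq] at h1
    have h2 := interior_subset h1
    exact (mem_image_inv_pow β).mp h2
  -- translate U
  set U' : Set G := ⇑(β⁻¹ ^ n₀) ⁻¹' U with hU'def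
  have hU'o : IsOpen U' := hUo.preimage (contPow hc' n₀)
  set u' : G := (β ^ n₀) (y₀ : G) with hu'def
  have hu'U' : u' ∈ U' := by
    show (β⁻¹ ^ n₀) ((β ^ n₀) (y₀ : G)) ∈ U
    rw [cancel₂]; exact hy₀U
  have hu'W : u' ∈ W := hUH _ hy₀U y₀.2
  have hU'H : ∀ {z : G}, z ∈ U' → z ∈ H → z ∈ W := by
    intro z hzU' hzH
    have h1 := hUH _ hzU' (hHβ'pow n₀ hzH)
    rwa [cancel₁] at h1
  -- compact orbit closure
  set K : Set G := closure (Set.range fun n : ℤ => (β ^ n) x) with hKdef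
  have hKH : K ⊆ H := by
    refine closure_minimal ?_ hcl
    rintro - ⟨n, rfl⟩
    exact hHzpow n hxH
  -- card cover
  have hmex : ∀ k : ↥K, ∃ n : ℕ, (β ^ n) (k : G) ∈ W := fun k => mem_H_iff.mp (hKH k.2)
  set m : ↥K → ℕ := fun k => (hmex k).choose with hmdef
  have hm : ∀ k : ↥K, (β ^ m k) (k : G) ∈ W := fun k => (hmex k).choose_spec
  set O : ↥K → Set G := fun k => (fun g => u' * ((β ^ m k) (k : G))⁻¹ * (β ^ m k) g) ⁻¹' U'
    with hOdef
  have hOo : ∀ k, IsOpen (O k) :=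
    fun k => hU'o.preimage (continuous_const.mul (contPow hc (m k)))
  have hOmem : ∀ k : ↥K, (k : G) ∈ O k := by
    intro k
    show u' * ((β ^ m k) (k : G))⁻¹ * (β ^ m k) (k : G) ∈ U'
    have h1 : u' * ((β ^ m k) (k : G))⁻¹ * (β ^ m k) (k : G) = u' := by group
    rw [h1]; exact hu'U'
  obtain ⟨t, ht⟩ := hK.elim_finite_subcover O hOo
    (fun z hz => mem_iUnion.mpr ⟨⟨z, hz⟩, hOmem _⟩)
  set M : ℕ := t.sup m with hMdef
  have key : ∀ z ∈ K, (β ^ M) z ∈ W := by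
    intro z hz
    obtain ⟨k, hkt, hzO⟩ := mem_iUnion₂.mp (ht hz)
    have hzH : z ∈ H := hKH hz
    have hq : u' * ((β ^ m k) (k : G))⁻¹ * (β ^ m k) z ∈ U' := hzO
    have hqH : u' * ((β ^ m k) (k : G))⁻¹ * (β ^ m k) z ∈ H :=
      mulH (mulH (mem_H_iff.mpr ⟨0, by simpa using hu'W⟩)
        (invH (mem_H_iff.mpr ⟨0, by simpa using hm k⟩))) (hHβpow (m k) hzH)
    have hqW : u' * ((β ^ m k) (k : G))⁻¹ * (β ^ m k) z ∈ W := hU'H hq hqH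
    have hzmW : (β ^ m k) z ∈ W := by
      have h2 : (β ^ m k) z =
          (β ^ m k) (k : G) * u'⁻¹ * (u' * ((β ^ m k) (k : G))⁻¹ * (β ^ m k) z) := by
        group
      rw [h2]
      exact mulW (mulW (hm k) (invW hu'W)) hqW
    exact pushW (Finset.le_sup hkt) hzmW
  -- conclude
  have hzK : (β ^ (-(M : ℤ))) x ∈ K := subset_closure ⟨-(M : ℤ), rfl⟩
  have hfin := key _ hzK
  have hid : (β ^ M) ((β ^ (-(M : ℤ))) x) = x := by
    rw [← MulAut.mul_apply]
    have : (β : MulAut G) ^ M * β ^ (-(M : ℤ)) = 1 := by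
      rw [← zpow_natCast β M, ← zpow_add]
      simp
    rw [this, MulAut.one_apply]
  rw [hid] at hfin
  exact hWV hfin

lemma mmPart_inv (α : MulAut G) (V : Set G) : mmPart α⁻¹ V = ppPart α V := by
  have h : negPart α⁻¹ V = posPart α V := by
    simp only [_root_.negPart, _root_.posPart, inv_inv]
  simp only [_root_.mmPart, _root_.ppPart, inv_inv, h]

/-- If `α` is tidy, then `U_α ∩ M_α = {1}` and `U_{α⁻¹} ∩ M_α = {1}`. -/
theorem contractionGroup_inter_levSet_of_tidy
    {G : Type*} [Group G] [TopologicalSpace G] [IsTopologicalGroup G]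
    [T2Space G] [LocallyCompactSpace G] [TotallyDisconnectedSpace G]
    (α : MulAut G) (hc : Continuous ⇑α) (hc' : Continuous ⇑α⁻¹)
    (hα : IsTidy α) :
    contractionGroup α ∩ levSet α = {1} ∧
      contractionGroup α⁻¹ ∩ levSet α = {1} := by
  have key : ∀ (β : MulAut G), Continuous ⇑β → Continuous ⇑β⁻¹ →
      (∀ U ∈ 𝓝 (1 : G), ∃ V : Subgroup G,
        (IsCompact (V : Set G) ∧ IsOpen (V : Set G) ∧ IsClosed (mmPart β (V : Set G)))
          ∧ (V : Set G) ⊆ U) →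
      contractionGroup β ∩ levSet β = {1} := by
    intro β hbc hbc' htidy
    apply Set.Subset.antisymm
    · rintro y ⟨hy1, hy2⟩
      have hall : ∀ U ∈ 𝓝 (1 : G), y ∈ U := by
        intro U hU
        obtain ⟨V, ⟨hVc, hVo, hVcl⟩, hVU⟩ := htidy U hU
        exact hVU (main_aux β hbc hbc' V hVc hVo hVcl hy1 hy2)
      have h1 : (1 : G) ∈ closure ({y} : Set G) :=
        mem_closure_iff_nhds.mpr (fun U hU => ⟨y, hall U hU, rfl⟩)
      rw [closure_singleton, Set.mem_singleton_iff] at h1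
      exact Set.mem_singleton_iff.mpr h1.symm
    · intro y hy
      rw [Set.mem_singleton_iff] at hy
      subst hy
      constructor
      · show Tendsto (fun n : ℕ => (β ^ n) (1 : G)) atTop (𝓝 1)
        simp only [map_one]
        exact tendsto_const_nhds
      · show IsCompact (closure (Set.range fun n : ℤ => (β ^ n) (1 : G)))
        have h2 : (Set.range fun n : ℤ => (β ^ n) (1 : G)) = {1} := by simp
        rw [h2, closure_singleton]
        exact isCompact_singleton
  have hlev : levSet α⁻¹ = levSet α := by
    ext z
    show IsCompact _ ↔ IsCompact _
    have h3 : (Set.range fun n : ℤ => ((α⁻¹) ^ n) z) = Set.range fun n : ℤ => (α ^ n) z := by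
      ext g
      simp only [Set.mem_range]
      constructor
      · rintro ⟨n, rfl⟩; exact ⟨-n, by simp [zpow_neg, inv_zpow, inv_inv]⟩
      · rintro ⟨n, rfl⟩; exact ⟨-n, by simp [zpow_neg, inv_zpow, inv_inv]⟩
    rw [h3]
  refine ⟨key α hc hc' (fun U hU => ?_), ?_⟩
  · obtain ⟨V, hV, hVU⟩ := hα U hU
    exact ⟨V, ⟨hV.1, hV.2.1, hV.2.2.2.2⟩, hVU⟩
  · have h2 := key α⁻¹ hc' (by rwa [inv_inv]) (fun U hU => ?_)
    · rwa [hlev] at h2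
    · obtain ⟨V, hV, hVU⟩ := hα U hU
      refine ⟨V, ⟨hV.1, hV.2.1, ?_⟩, hVU⟩
      rw [mmPart_inv]
      exact hV.2.2.2.1
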